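/- arXiv:1403.2898 — 8 statements merged into one kernel-verified Lean document; each statement's English description precedes it below -/
import Mathlib

section
/- For A, B ∈ G(Z,C) and a family ℬ ⊆ G(Z,C), it holds that A ⊕ inf ℬ = inf{A ⊕ B | B ∈ ℬ}, where A ⊕ B = cl(A + B) and inf is taken with respect to ⊇, i.e., inf ℬ = cl co ⋃_{B ∈ ℬ} B (with inf ∅ = ∅ interpreted appropriately). In particular (G(Z,C), ⊕, ⊇) is inf-residuated. -/
/-!
Every `A ∈ G(Z,C)` is convex, and for convex `A` one has `A + co S = co (A + S)`.
With `S = ⋃ ℬ` and `A + ⋃ ℬ = ⋃_{B ∈ ℬ} (A + B)`, both sides become the closed convex hull of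
`⋃_{B ∈ ℬ} (A + B)`: closures may be dropped inside a sum, `cl (A + cl X) = cl (A + X)`, and
inside a closed convex hull.
-/

open Pointwise

/-- The family `G(Z,C) = {A ⊆ Z | A = cl co (A + C)}`. -/
def GSet (Z : Type*) [AddCommGroup Z] [Module ℝ Z] [TopologicalSpace Z] (C : Set Z) :
    Set (Set Z) :=
  {A : Set Z | A = closure (convexHull ℝ (A + C))}

open Set

theorem closure_add_closure_right {G : Type*} [Add G] [TopologicalSpace G] [ContinuousAdd G]
    (s t : Set G) : closure (s + closure t) = closure (s + t) :=
  subset_antisymm (closure_minimal (set_vadd_closure_subset s t) isClosed_closure)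
    (closure_mono (add_subset_add_left subset_closure))

theorem closedConvexHull_biUnion_closure {𝕜 E ι : Type*} [Semiring 𝕜] [PartialOrder 𝕜]
    [AddCommGroup E] [Module 𝕜 E] [TopologicalSpace E] (s : Set ι) (t : ι → Set E) :
    closedConvexHull 𝕜 (⋃ i ∈ s, closure (t i)) = closedConvexHull 𝕜 (⋃ i ∈ s, t i) := by
  refine subset_antisymm ?_ ((closedConvexHull 𝕜).monotone (biUnion_mono subset_rfl
    fun _ _ ↦ subset_closure))
  calc closedConvexHull 𝕜 (⋃ i ∈ s, closure (t i))
      ⊆ closedConvexHull 𝕜 (closure (⋃ i ∈ s, t i)) :=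
        (closedConvexHull 𝕜).monotone (iUnion₂_subset fun i hi ↦
          closure_mono (subset_biUnion_of_mem (u := t) hi))
    _ = closedConvexHull 𝕜 (⋃ i ∈ s, t i) := closedConvexHull_closure_eq_closedConvexHull

theorem Convex.closure_add_closure_convexHull_sUnion {𝕜 E : Type*} [Field 𝕜] [LinearOrder 𝕜]
    [IsStrictOrderedRing 𝕜] [AddCommGroup E] [Module 𝕜 E] [TopologicalSpace E]
    [IsTopologicalAddGroup E] [ContinuousConstSMul 𝕜 E] {A : Set E} (hA : Convex 𝕜 A)
    (ℬ : Set (Set E)) :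
    closure (A + closure (convexHull 𝕜 (⋃₀ ℬ))) =
      closure (convexHull 𝕜 (⋃ B ∈ ℬ, closure (A + B))) := by
  calc closure (A + closure (convexHull 𝕜 (⋃₀ ℬ)))
      = closure (A + convexHull 𝕜 (⋃₀ ℬ)) := closure_add_closure_right _ _
    _ = closedConvexHull 𝕜 (A + ⋃₀ ℬ) := by
        rw [closedConvexHull_eq_closure_convexHull, convexHull_add, hA.convexHull_eq]
    _ = closure (convexHull 𝕜 (⋃ B ∈ ℬ, closure (A + B))) := by
        rw [add_sUnion, ← closedConvexHull_biUnion_closure, closedConvexHull_eq_closure_convexHull]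

theorem convex_of_mem_GSet {Z : Type*} [AddCommGroup Z] [Module ℝ Z] [TopologicalSpace Z]
    [IsTopologicalAddGroup Z] [ContinuousConstSMul ℝ Z] {C A : Set Z} (hA : A ∈ GSet Z C) :
    Convex ℝ A := by
  rw [hA]
  exact (convex_convexHull ℝ _).closure

theorem GSet_oplus_inf_general
    {Z : Type*} [AddCommGroup Z] [Module ℝ Z] [TopologicalSpace Z]
    [IsTopologicalAddGroup Z] [ContinuousSMul ℝ Z]
    (C : Set Z)
    (A : Set Z) (hA : A ∈ GSet Z C) (ℬ : Set (Set Z)) :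
    closure (A + closure (convexHull ℝ (⋃₀ ℬ))) =
      closure (convexHull ℝ (⋃ B ∈ ℬ, closure (A + B))) :=
  (convex_of_mem_GSet hA).closure_add_closure_convexHull_sUnion ℬ

/-- For `A ∈ G(Z,C)` and `ℬ ⊆ G(Z,C)`: `A ⊕ inf ℬ = inf {A ⊕ B | B ∈ ℬ}`, where
`A ⊕ B = cl(A + B)` and the infimum with respect to `⊇` is
`inf ℬ = cl co ⋃_{B ∈ ℬ} B`.  In particular `(G(Z,C), ⊕, ⊇)` is inf-residuated. -/
theorem GSet_oplus_inf
    {Z : Type*} [AddCommGroup Z] [Module ℝ Z] [TopologicalSpace Z]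
    [IsTopologicalAddGroup Z] [ContinuousSMul ℝ Z] [LocallyConvexSpace ℝ Z]
    (C : Set Z) (hCclosed : IsClosed C) (hCconv : Convex ℝ C) (hC0 : (0 : Z) ∈ C)
    (hCcone : ∀ c ∈ C, ∀ t : ℝ, 0 < t → t • c ∈ C)
    (A : Set Z) (hA : A ∈ GSet Z C) (ℬ : Set (Set Z)) (hℬ : ℬ ⊆ GSet Z C) :
    closure (A + closure (convexHull ℝ (⋃₀ ℬ))) =
      closure (convexHull ℝ (⋃ B ∈ ℬ, closure (A + B))) :=
  GSet_oplus_inf_general C A hA ℬ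
end

section
/- Let φ : X → ℝ ∪ {±∞} and a, b ∈ X with a ≠ b such that the restriction φ_{a,b}(t) = φ(a + t(b-a)) for t ∈ [0,1] (and +∞ outside) is lower semicontinuous. If either φ(a) = +∞ or both a, b ∈ dom φ, then there exists t ∈ [0,1) such that φ(b) ⊖ φ(a) ≤ (φ_{a,b})↓(t, 1), where ⊖ is the inf-residuation on extended reals and (φ_{a,b})↓(t,1) = liminf_{s↓0} (1/s)(φ_{a,b}(t+s) ⊖ φ_{a,b}(t)) is the lower Dini derivative. -/
/-!
If `φ(a) = +∞` or `φ(b) = -∞` then `φ(b) ⊖ φ(a) = -∞` and any `t` works. If `φ_{a,b}` takes the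
value `-∞`, the last point where it does so lies in `[0,1)`, and there the Dini derivative is `+∞`
because `r ⊖ (-∞) = +∞` for `r ≠ -∞`. Otherwise `φ(a)`, `φ(b)` are finite and we minimise the
lower semicontinuous tilted function `φ_{a,b}(t) - (φ(b) - φ(a)) t` over `[0,1]`: it takes equal
values at both ends and is `+∞` to the right of `1`, so it has a minimiser `t < 1`, at which every
right difference quotient of `φ_{a,b}` is at least `φ(b) - φ(a)`.
-/

open Filter Set Topology

/-- Inf-addition on the extended reals. -/
noncomputable def infAdd (r s : EReal) : EReal :=
  sInf {x : EReal | ∃ a b : ℝ, x = ((a + b : ℝ) : EReal) ∧ r ≤ (a : EReal) ∧ s ≤ (b : EReal)}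

/-- Inf-residuation on the extended reals: `r ⊖ s = inf {t ∈ ℝ | r ≤ s +• t}`. -/
noncomputable def eResid (r s : EReal) : EReal :=
  sInf {x : EReal | ∃ t : ℝ, x = (t : EReal) ∧ r ≤ infAdd s (t : EReal)}

/-- Lower Dini directional derivative of `ψ : ℝ → EReal` at `x` in direction `u`:
`ψ↓(x,u) = liminf_{t↓0} (1/t)(ψ(x+tu) ⊖ ψ(x))`. -/
noncomputable def sDini (ψ : ℝ → EReal) (x u : ℝ) : EReal :=
  Filter.liminf (fun t : ℝ => ((1 / t : ℝ) : EReal) * eResid (ψ (x + t * u)) (ψ x))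
    (nhdsWithin 0 (Set.Ioi 0))

lemma EReal.sInf_eq_bot_of_forall_exists_le_coe {S : Set EReal}
    (h : ∀ t : ℝ, ∃ y ∈ S, y ≤ (t : EReal)) : sInf S = ⊥ := by
  rw [EReal.eq_bot_iff_forall_lt]
  intro y
  obtain ⟨z, hz, hle⟩ := h (y - 1)
  calc sInf S ≤ z := sInf_le hz
    _ ≤ ((y - 1 : ℝ) : EReal) := hle
    _ < y := by exact_mod_cast sub_one_lt y

lemma LowerSemicontinuous.add_coe {α : Type*} [TopologicalSpace α] {f : α → EReal}
    (hf : LowerSemicontinuous f) {g : α → ℝ} (hg : Continuous g) :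
    LowerSemicontinuous fun x => f x + g x :=
  hf.add' (continuous_coe_real_ereal.comp hg).lowerSemicontinuous fun _ =>
    EReal.continuousAt_add (Or.inr (EReal.coe_ne_bot _)) (Or.inr (EReal.coe_ne_top _))

lemma infAdd_top_left (t : EReal) : infAdd ⊤ t = ⊤ := by
  rw [infAdd]
  refine (congrArg sInf (?_ : _ = (∅ : Set EReal))).trans sInf_empty
  ext x
  simp only [mem_ofPred_eq, mem_empty_iff_false, iff_false, not_exists]
  rintro a b ⟨-, ha, -⟩
  exact (EReal.coe_lt_top a).not_ge ha

lemma infAdd_bot_left (t : ℝ) : infAdd ⊥ (t : EReal) = ⊥ := by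
  refine EReal.sInf_eq_bot_of_forall_exists_le_coe fun u =>
    ⟨((u - t) + t : ℝ), ⟨u - t, t, rfl, bot_le, le_rfl⟩, ?_⟩
  exact_mod_cast le_of_eq (by ring)

lemma infAdd_coe_coe (q t : ℝ) : infAdd (q : EReal) (t : EReal) = ((q + t : ℝ) : EReal) := by
  refine le_antisymm (sInf_le ⟨q, t, rfl, le_rfl, le_rfl⟩) (le_sInf ?_)
  rintro x ⟨a, c, rfl, ha, hc⟩
  exact_mod_cast add_le_add (EReal.coe_le_coe_iff.mp ha) (EReal.coe_le_coe_iff.mp hc)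

lemma eResid_bot_left (s : EReal) : eResid ⊥ s = ⊥ :=
  EReal.sInf_eq_bot_of_forall_exists_le_coe fun t => ⟨t, ⟨t, rfl, bot_le⟩, le_rfl⟩

lemma eResid_top_right (r : EReal) : eResid r ⊤ = ⊥ :=
  EReal.sInf_eq_bot_of_forall_exists_le_coe fun t =>
    ⟨t, ⟨t, rfl, by rw [infAdd_top_left]; exact le_top⟩, le_rfl⟩

lemma eResid_bot_right {r : EReal} (hr : r ≠ ⊥) : eResid r ⊥ = ⊤ := by
  rw [eResid]
  refine (congrArg sInf (?_ : _ = (∅ : Set EReal))).trans sInf_empty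
  ext x
  simp only [mem_ofPred_eq, mem_empty_iff_false, iff_false, not_exists]
  rintro t ⟨-, h⟩
  rw [infAdd_bot_left] at h
  exact hr (le_bot_iff.mp h)

lemma coe_le_eResid {x : EReal} {c d : ℝ} (h : ((c + d : ℝ) : EReal) ≤ x) :
    (d : EReal) ≤ eResid x c := by
  refine le_sInf ?_
  rintro _ ⟨t, rfl, ht⟩
  rw [infAdd_coe_coe] at ht
  have : c + d ≤ c + t := by exact_mod_cast h.trans ht
  exact_mod_cast (by linarith : d ≤ t)

lemma eResid_coe_coe (d c : ℝ) : eResid (d : EReal) (c : EReal) = ((d - c : ℝ) : EReal) := by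
  refine le_antisymm (sInf_le ⟨d - c, rfl, ?_⟩) (coe_le_eResid (by rw [add_sub_cancel]))
  rw [infAdd_coe_coe, add_sub_cancel]

section Dini

variable {f : ℝ → EReal}

lemma coe_le_sDini {t c r : ℝ} (hc : f t = c)
    (h : ∀ᶠ s in 𝓝[>] 0, ((c + r * s : ℝ) : EReal) ≤ f (t + s)) :
    (r : EReal) ≤ sDini f t 1 := by
  refine le_liminf_of_le (by isBoundedDefault) ?_
  filter_upwards [h, self_mem_nhdsWithin] with s hs (hpos : 0 < s)
  rw [mul_one, hc]
  calc (r : EReal) = ((1 / s : ℝ) : EReal) * ((r * s : ℝ) : EReal) := by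
        rw [← EReal.coe_mul]; field_simp
    _ ≤ _ := mul_le_mul_of_nonneg_left (coe_le_eResid hs) (by exact_mod_cast by positivity)

lemma sDini_eq_top_of_eq_bot {t : ℝ} (hbot : f t = ⊥) (hne : ∀ s > 0, f (t + s) ≠ ⊥) :
    sDini f t 1 = ⊤ := by
  refine top_le_iff.mp (le_liminf_of_le (by isBoundedDefault) ?_)
  filter_upwards [self_mem_nhdsWithin] with s (hs : 0 < s)
  rw [mul_one, hbot, eResid_bot_right (hne s hs), EReal.coe_mul_top_of_pos (one_div_pos.mpr hs)]

lemma exists_mem_Ico_sDini_eq_top (hf : LowerSemicontinuous f) {t₁ : ℝ} (ht₁ : 0 ≤ t₁)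
    (hbot : f t₁ = ⊥) (hne : ∀ t, 1 ≤ t → f t ≠ ⊥) :
    ∃ t ∈ Ico (0 : ℝ) 1, sDini f t 1 = ⊤ := by
  set B : Set ℝ := f ⁻¹' Iic ⊥
  have hBlt : ∀ t ∈ B, t < 1 := fun t ht => not_le.mp fun h => hne t h (le_bot_iff.mp ht)
  have hbdd : BddAbove B := ⟨1, fun t ht => (hBlt t ht).le⟩
  have hmem : sSup B ∈ B := (hf.isClosed_preimage ⊥).csSup_mem ⟨t₁, hbot.le⟩ hbdd
  refine ⟨sSup B, ⟨ht₁.trans (le_csSup hbdd hbot.le), hBlt _ hmem⟩,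
    sDini_eq_top_of_eq_bot (le_bot_iff.mp hmem) fun s hs hs' => ?_⟩
  linarith [le_csSup hbdd hs'.le]

lemma exists_mem_Ico_slope_le_sDini (hf : LowerSemicontinuous f) (hne : ∀ t, f t ≠ ⊥)
    (htop : ∀ t, 1 < t → f t = ⊤) {A B : ℝ} (h0 : f 0 = A) (h1 : f 1 = B) :
    ∃ t ∈ Ico (0 : ℝ) 1, ((B - A : ℝ) : EReal) ≤ sDini f t 1 := by
  set r := B - A
  set ψ : ℝ → EReal := fun t => f t + ((-(r * t) : ℝ) : EReal)
  have hψ0 : ψ 0 = A := by simp [ψ, h0]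
  have hψ1 : ψ 1 = A := by simp only [ψ, h1, mul_one, ← EReal.coe_add, r]; ring_nf
  have hψ : LowerSemicontinuous ψ := hf.add_coe (g := fun t => -(r * t)) (by fun_prop)
  obtain ⟨t₁, ht₁, hmin₁⟩ := (hψ.lowerSemicontinuousOn (Icc 0 1)).exists_isMinOn
    (nonempty_Icc.mpr zero_le_one) isCompact_Icc
  obtain ⟨t₀, ht₀, hmin⟩ : ∃ t₀ ∈ Ico (0 : ℝ) 1, ∀ t ∈ Icc (0 : ℝ) 1, ψ t₀ ≤ ψ t := by
    -- `ψ 0 = ψ 1`, so a minimiser at `1` may be replaced by `0`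
    rcases ht₁.2.lt_or_eq with h | rfl
    · exact ⟨t₁, ⟨ht₁.1, h⟩, hmin₁⟩
    · exact ⟨0, left_mem_Ico.mpr zero_lt_one, fun t ht => hψ0.trans_le (hψ1 ▸ hmin₁ ht)⟩
  have hψt₀ : ψ t₀ ≤ A := hψ0 ▸ hmin 0 (left_mem_Icc.mpr zero_le_one)
  have hfin : f t₀ ≠ ⊤ := fun h => by
    simp only [ψ, h, EReal.top_add_coe, top_le_iff] at hψt₀
    exact EReal.coe_ne_top A hψt₀
  obtain ⟨c, hc⟩ : ∃ c : ℝ, f t₀ = c := ⟨_, (EReal.coe_toReal hfin (hne t₀)).symm⟩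
  refine ⟨t₀, ht₀, coe_le_sDini hc (eventually_nhdsWithin_of_forall fun s (hs : 0 < s) => ?_)⟩
  rcases le_or_gt (t₀ + s) 1 with hs1 | hs1
  · have h := hmin (t₀ + s) ⟨by linarith [ht₀.1], hs1⟩
    simp only [ψ, hc, ← EReal.coe_add] at h
    convert EReal.sub_le_of_le_add h using 1
    rw [← EReal.coe_sub]
    ring_nf
  · rw [htop _ hs1]
    exact le_top

end Dini

theorem diewert_improper_general
    {X : Type*} [AddCommGroup X] [Module ℝ X]
    (φ : X → EReal) (a b : X)
    (φab : ℝ → EReal)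
    (hφab : φab = fun t : ℝ => if t ∈ Set.Icc (0 : ℝ) 1 then φ (a + t • (b - a)) else ⊤)
    (hlsc : LowerSemicontinuous φab)
    (hcase : φ a = ⊤ ∨ (φ a ≠ ⊤ ∧ φ b ≠ ⊤)) :
    ∃ t ∈ Set.Ico (0 : ℝ) 1, eResid (φ b) (φ a) ≤ sDini φab t 1 := by
  have h0 : φab 0 = φ a := by simp [hφab]
  have h1 : φab 1 = φ b := by simp [hφab]
  have hout : ∀ t ∉ Icc (0 : ℝ) 1, φab t = ⊤ := fun t ht => by simp only [hφab, if_neg ht]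
  have hright : ∀ t, 1 < t → φab t = ⊤ := fun t ht => hout t fun h => ht.not_ge h.2
  have h0mem : (0 : ℝ) ∈ Ico 0 1 := left_mem_Ico.mpr zero_lt_one
  rcases hcase with ha | ⟨ha, hb⟩
  · exact ⟨0, h0mem, by simp [ha, eResid_top_right]⟩
  by_cases hb_bot : φ b = ⊥
  · exact ⟨0, h0mem, by simp [hb_bot, eResid_bot_left]⟩
  by_cases hbot : ∃ t, φab t = ⊥
  · obtain ⟨t₁, ht₁⟩ := hbot
    have ht₁mem : t₁ ∈ Icc (0 : ℝ) 1 :=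
      by_contra fun h => top_ne_bot ((hout t₁ h).symm.trans ht₁)
    obtain ⟨t, ht, hdini⟩ := exists_mem_Ico_sDini_eq_top hlsc ht₁mem.1 ht₁ fun t ht => by
      rcases ht.eq_or_lt with rfl | ht
      · exact h1 ▸ hb_bot
      · exact hright t ht ▸ top_ne_bot
    exact ⟨t, ht, hdini ▸ le_top⟩
  push Not at hbot
  have hA := EReal.coe_toReal ha (h0 ▸ hbot 0)
  have hB := EReal.coe_toReal hb hb_bot
  obtain ⟨t, ht, hdini⟩ :=
    exists_mem_Ico_slope_le_sDini hlsc hbot hright (h0.trans hA.symm) (h1.trans hB.symm)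
  exact ⟨t, ht, by rwa [← hA, ← hB, eResid_coe_coe]⟩

/-- Diewert's mean value theorem for improper extended-real-valued functions (part (a)):
if `φ_{a,b}` is l.s.c. and either `φ(a) = +∞` or `a, b ∈ dom φ`, then there is
`t ∈ [0,1)` with `φ(b) ⊖ φ(a) ≤ (φ_{a,b})↓(t,1)`. -/
theorem diewert_improper
    {X : Type*} [AddCommGroup X] [Module ℝ X]
    (φ : X → EReal) (a b : X) (hab : a ≠ b)
    (φab : ℝ → EReal)
    (hφab : φab = fun t : ℝ => if t ∈ Set.Icc (0 : ℝ) 1 then φ (a + t • (b - a)) else ⊤)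
    (hlsc : LowerSemicontinuous φab)
    (hcase : φ a = ⊤ ∨ (φ a ≠ ⊤ ∧ φ b ≠ ⊤)) :
    ∃ t ∈ Set.Ico (0 : ℝ) 1, eResid (φ b) (φ a) ≤ sDini φab t 1 :=
  diewert_improper_general φ a b φab hφab hlsc hcase
end

section
/- Let φ : X → ℝ ∪ {±∞} be radially lower semicontinuous at every point and a ∈ dom φ. If the lower Dini derivative satisfies φ↓(b, a - b) ≤ 0 for all b ∈ X, then φ(a) = inf_{x ∈ X} φ(x); moreover either φ(a) = -∞, or φ is proper and dom φ is star-shaped at a. -/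
open Filter Set

/-- Lower Dini directional derivative of `φ : X → EReal` at `x` in direction `u`. -/
noncomputable def vDini {X : Type*} [AddCommGroup X] [Module ℝ X]
    (φ : X → EReal) (x u : X) : EReal :=
  Filter.liminf (fun t : ℝ => ((1 / t : ℝ) : EReal) * eResid (φ (x + t • u)) (φ x))
    (nhdsWithin 0 (Set.Ioi 0))

/-!
Fix `b` and put `ψ t = φ (b + t • (a - b))`. The Dini condition at `b + c • (a - b)`, whose
direction `a - (b + c • (a - b))` is a positive multiple of `a - b` for `c < 1`, says that the lower
right Dini derivative of `ψ` is nonpositive on `[0, 1)`; since `ψ` is lower semicontinuous on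
`[0, 1]`, continuous induction makes `ψ` nonincreasing there: the set where
`ψ t ≤ ψ 0 + ε t` is closed and contains points just to the right of each of its points below `1`.
Hence `φ (t • a + (1 - t) • b) ≤ φ b` for `t ∈ [0, 1]`: at `t = 1` this is the minimality of `a`,
which forces properness unless `φ a = ⊥`, and for general `t` it is the star shape of `dom φ`.
-/

open Topology

namespace EReal

lemma le_of_forall_pos_le_add_coe {x y : EReal} (h : ∀ ε : ℝ, 0 < ε → x ≤ y + ε) : x ≤ y := by
  refine le_of_forall_lt_iff_le.1 fun z hyz => ?_
  obtain ⟨w, hyw, hwz⟩ := exists_between_coe_real hyz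
  calc x ≤ y + (z - w : ℝ) := h _ (_root_.sub_pos.2 (EReal.coe_lt_coe_iff.1 hwz))
    _ ≤ w + (z - w : ℝ) := add_le_add_left hyw.le _
    _ = z := by rw [← coe_add, add_sub_cancel]

lemma lt_coe_mul_of_coe_inv_mul_lt {t d : ℝ} (ht : 0 < t) {q : EReal}
    (h : ((1 / t : ℝ) : EReal) * q < d) : q < (t * d : ℝ) := by
  rwa [one_div, coe_inv, ← EReal.div_eq_inv_mul, div_lt_iff (EReal.coe_pos.2 ht) (coe_ne_top t),
    ← coe_mul, mul_comm] at h

end EReal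

lemma infAdd_coe_le_add (s : EReal) (t : ℝ) : infAdd s t ≤ s + t := by
  induction s using EReal.rec with
  | bot =>
    refine ((EReal.eq_bot_iff_forall_lt _).2 fun y => ?_).le
    calc infAdd ⊥ t ≤ ((y - 1 - t + t : ℝ) : EReal) := sInf_le ⟨y - 1 - t, t, rfl, bot_le, le_rfl⟩
      _ < y := EReal.coe_lt_coe_iff.2 (by linarith)
  | coe s => exact sInf_le ⟨s, t, EReal.coe_add s t, le_rfl, le_rfl⟩
  | top => exact le_top

lemma le_add_of_eResid_lt {r s : EReal} {c : ℝ} (h : eResid r s < c) : r ≤ s + c := by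
  obtain ⟨_, ⟨t, rfl, hrt⟩, htc⟩ := sInf_lt_iff.1 h
  calc r ≤ infAdd s t := hrt
    _ ≤ s + t := infAdd_coe_le_add s t
    _ ≤ s + c := by gcongr

lemma frequently_le_add_of_vDini_lt {X : Type*} [AddCommGroup X] [Module ℝ X]
    {φ : X → EReal} {x u : X} {ε : ℝ} (h : vDini φ x u < ε) :
    ∃ᶠ t in 𝓝[>] 0, φ (x + t • u) ≤ φ x + (t * ε : ℝ) :=
  ((frequently_lt_of_liminf_lt (by isBoundedDefault) h).and_eventually
    self_mem_nhdsWithin).mono fun _ ⟨hlt, ht⟩ =>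
      le_add_of_eResid_lt (EReal.lt_coe_mul_of_coe_inv_mul_lt ht hlt)

lemma isClosed_setOf_le_add_inter {α : Type*} [TopologicalSpace α] {ψ : α → EReal} {s : Set α}
    (hs : IsClosed s) (hψ : LowerSemicontinuousOn ψ s) (C : EReal) {g : α → ℝ}
    (hg : Continuous g) : IsClosed ({t | ψ t ≤ C + g t} ∩ s) := by
  have hsub : LowerSemicontinuousOn (fun t => ψ t + ((-g t : ℝ) : EReal)) s :=
    hψ.add' ((continuous_coe_real_ereal.comp hg.neg).lowerSemicontinuous.lowerSemicontinuousOn s)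
      fun t _ => EReal.continuousAt_add (Or.inr (EReal.coe_ne_bot _)) (Or.inr (EReal.coe_ne_top _))
  obtain ⟨v, hv, hsv⟩ := lowerSemicontinuousOn_iff_preimage_Iic.1 hsub C
  have hset : {t | ψ t ≤ C + g t} = (fun t => ψ t + ((-g t : ℝ) : EReal)) ⁻¹' Iic C := by
    ext t
    simp only [mem_ofPred_eq, mem_preimage, mem_Iic, EReal.coe_neg, ← sub_eq_add_neg]
    exact (EReal.sub_le_iff_le_add (Or.inl (EReal.coe_ne_bot _))
      (Or.inl (EReal.coe_ne_top _))).symm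
  rw [hset, inter_comm, hsv]
  exact hs.inter hv

lemma le_add_mul_sub_of_frequently_le_add {ψ : ℝ → EReal} {a b ε : ℝ}
    (hψ : LowerSemicontinuousOn ψ (Icc a b))
    (hstep : ∀ c ∈ Ico a b, ∃ᶠ z in 𝓝[>] c, ψ z ≤ ψ c + (ε * (z - c) : ℝ)) :
    ∀ t ∈ Icc a b, ψ t ≤ ψ a + (ε * (t - a) : ℝ) := by
  refine IsClosed.Icc_subset_of_forall_exists_gt (s := {t | ψ t ≤ ψ a + (ε * (t - a) : ℝ)})
    (isClosed_setOf_le_add_inter isClosed_Icc hψ _ (by fun_prop)) (by simp) ?_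
  rintro c ⟨hc, hcI⟩ y hy
  obtain ⟨z, hz, hzI⟩ := ((hstep c hcI).and_eventually (Ioo_mem_nhdsGT hy)).exists
  refine ⟨z, ?_, hzI.1, hzI.2.le⟩
  calc ψ z ≤ ψ c + (ε * (z - c) : ℝ) := hz
    _ ≤ ψ a + (ε * (c - a) : ℝ) + (ε * (z - c) : ℝ) := by gcongr; exact hc
    _ = ψ a + (ε * (z - a) : ℝ) := by rw [add_assoc, ← EReal.coe_add]; ring_nf

lemma antitoneOn_of_frequently_le_add {ψ : ℝ → EReal} {a b : ℝ}
    (hψ : LowerSemicontinuousOn ψ (Icc a b))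
    (hstep : ∀ c ∈ Ico a b, ∀ ε > 0, ∃ᶠ z in 𝓝[>] c, ψ z ≤ ψ c + (ε * (z - c) : ℝ)) :
    AntitoneOn ψ (Icc a b) := by
  intro x hx y hy hxy
  refine EReal.le_of_forall_pos_le_add_coe fun ε hε => ?_
  have hδ : 0 < ε / (y - x + 1) := div_pos hε (by linarith)
  calc ψ y ≤ ψ x + (ε / (y - x + 1) * (y - x) : ℝ) :=
        le_add_mul_sub_of_frequently_le_add (hψ.mono (Icc_subset_Icc hx.1 hy.2))
          (fun c hc => hstep c ⟨hx.1.trans hc.1, hc.2.trans_le hy.2⟩ _ hδ) y ⟨hxy, le_rfl⟩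
    _ ≤ ψ x + ε := by
        gcongr
        rw [div_mul_eq_mul_div, div_le_iff₀ (by linarith)]
        nlinarith

section Segment

variable {X : Type*} [AddCommGroup X] [Module ℝ X] {φ : X → EReal} {a : X}

lemma frequently_le_add_along_segment (hdini : ∀ x : X, vDini φ x (a - x) ≤ 0) (b : X)
    {c ε : ℝ} (hc : c < 1) (hε : 0 < ε) :
    ∃ᶠ z in 𝓝[>] c, φ (b + z • (a - b)) ≤ φ (b + c • (a - b)) + (ε * (z - c) : ℝ) := by
  have hc' : 0 < 1 - c := sub_pos.2 hc
  have hfreq := frequently_le_add_of_vDini_lt (ε := ε * (1 - c))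
    ((hdini (b + c • (a - b))).trans_lt (EReal.coe_pos.2 (mul_pos hε hc')))
  rw [show a - (b + c • (a - b)) = (1 - c) • (a - b) by module] at hfreq
  have hmap : Tendsto (fun t : ℝ => c + t * (1 - c)) (𝓝[>] 0) (𝓝[>] c) := by
    refine tendsto_nhdsWithin_of_tendsto_nhds_of_eventually_within _ ?_ ?_
    · exact (Continuous.tendsto' (by fun_prop) 0 c (by simp)).mono_left nhdsWithin_le_nhds
    · filter_upwards [self_mem_nhdsWithin] with t (ht : 0 < t)
      exact lt_add_of_pos_right c (mul_pos ht hc')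
  refine hmap.frequently (hfreq.mono fun t ht => ?_)
  rwa [show b + (c + t * (1 - c)) • (a - b) = b + c • (a - b) + t • ((1 - c) • (a - b)) by module,
    show ε * (c + t * (1 - c) - c) = t * (ε * (1 - c)) by ring]

lemma antitoneOn_segment {b : X}
    (hradlsc : LowerSemicontinuous
      (fun t : ℝ => if t ∈ Icc (0 : ℝ) 1 then φ (b + t • (a - b)) else ⊤))
    (hdini : ∀ x : X, vDini φ x (a - x) ≤ 0) :
    AntitoneOn (fun t : ℝ => φ (b + t • (a - b))) (Icc 0 1) := by
  have hlsc : LowerSemicontinuousOn (fun t : ℝ => φ (b + t • (a - b))) (Icc 0 1) := fun t ht =>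
    LowerSemicontinuousWithinAt.congr_of_eventuallyEq (hradlsc.lowerSemicontinuousOn _ t ht)
      ht (eventuallyEq_nhdsWithin_of_eqOn fun _ hs => if_pos hs)
  exact antitoneOn_of_frequently_le_add hlsc fun c hc _ hε =>
    frequently_le_add_along_segment hdini b hc.2 hε

end Segment

theorem attainment_if_dini_nonpos_general
    {X : Type*} [AddCommGroup X] [Module ℝ X]
    (φ : X → EReal) (a : X)
    (hradlsc : ∀ x b : X, LowerSemicontinuous
      (fun t : ℝ => if t ∈ Set.Icc (0 : ℝ) 1 then φ (x + t • (b - x)) else ⊤))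
    (hdini : ∀ b : X, vDini φ b (a - b) ≤ 0) :
    (∀ x : X, φ a ≤ φ x) ∧
      (φ a = ⊥ ∨
        ((∀ x : X, φ x ≠ ⊥) ∧
          ∀ x : X, φ x ≠ ⊤ → ∀ t ∈ Set.Icc (0 : ℝ) 1, φ (t • a + (1 - t) • x) ≠ ⊤)) := by
  have hseg : ∀ x : X, ∀ t ∈ Icc (0 : ℝ) 1, φ (t • a + (1 - t) • x) ≤ φ x := fun x t ht => by
    simpa [show t • a + (1 - t) • x = x + t • (a - x) by module] using
      antitoneOn_segment (hradlsc x a) hdini (left_mem_Icc.2 zero_le_one) ht ht.1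
  have hmin : ∀ x : X, φ a ≤ φ x := fun x => by simpa using hseg x 1 (right_mem_Icc.2 zero_le_one)
  refine ⟨hmin, or_iff_not_imp_left.2 fun hbot => ⟨fun x hx => hbot (le_bot_iff.1 (hx ▸ hmin x)),
    fun x hx t ht => ne_top_of_le_ne_top hx (hseg x t ht)⟩⟩

/-- If `φ` is radially l.s.c. (at every point) and `φ↓(b, a-b) ≤ 0` for all `b`, where
`a ∈ dom φ`, then the infimum of `φ` is attained at `a`; moreover either `φ(a) = -∞` or
`φ` is proper and `dom φ` is star-shaped at `a`. -/
theorem attainment_if_dini_nonpos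
    {X : Type*} [AddCommGroup X] [Module ℝ X]
    (φ : X → EReal) (a : X) (ha : φ a ≠ ⊤)
    (hradlsc : ∀ x b : X, LowerSemicontinuous
      (fun t : ℝ => if t ∈ Set.Icc (0 : ℝ) 1 then φ (x + t • (b - x)) else ⊤))
    (hdini : ∀ b : X, vDini φ b (a - b) ≤ 0) :
    (∀ x : X, φ a ≤ φ x) ∧
      (φ a = ⊥ ∨
        ((∀ x : X, φ x ≠ ⊥) ∧
          ∀ x : X, φ x ≠ ⊤ → ∀ t ∈ Set.Icc (0 : ℝ) 1, φ (t • a + (1 - t) • x) ≠ ⊤)) :=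
  attainment_if_dini_nonpos_general φ a hradlsc hdini
end

section
/- For φ : X → ℝ ∪ {±∞}, the strict sublevel set L^<_φ(φ(x)) ∪ {x} is star-shaped at x for every x ∈ dom φ if and only if φ is semistrictly quasiconvex. -/
/-!
Star-shapedness of `{y | φ y < φ x} ∪ {x}` at `x` says exactly that `φ` stays strictly below
`φ x` on the open segment from `x` to any `y` with `φ y < φ x`. Since the segment from `a` to
`b` is the segment from `b` to `a` traversed backwards, this condition at the endpoint with the
larger value is semistrict quasiconvexity.
-/

open Set

section StarConvex

variable {𝕜 E : Type*} [Field 𝕜] [LinearOrder 𝕜] [IsStrictOrderedRing 𝕜]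
  [AddCommGroup E] [Module 𝕜 E]

theorem starConvex_iff_add_smul_sub_mem {x : E} {s : Set E} :
    StarConvex 𝕜 x s ↔ ∀ y ∈ s, ∀ t ∈ Icc (0 : 𝕜) 1, x + t • (y - x) ∈ s := by
  simp only [starConvex_iff_segment_subset, segment_eq_image', image_subset_iff]
  rfl

theorem starConvex_strictSublevel_union_iff {β : Type*} [Preorder β] (f : E → β) (x : E) :
    StarConvex 𝕜 x ({y | f y < f x} ∪ {x}) ↔
      ∀ y, f y < f x → ∀ t ∈ Ioo (0 : 𝕜) 1, f (x + t • (y - x)) < f x := by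
  rw [starConvex_iff_openSegment_subset (by simp)]
  constructor
  · intro h y hy t ht
    have hseg : x + t • (y - x) ∈ openSegment 𝕜 x y := by
      rw [openSegment_eq_image']
      exact mem_image_of_mem _ ht
    rcases h (Or.inl hy) hseg with hlt | heq
    · exact hlt
    · rw [mem_singleton_iff.mp heq, left_mem_openSegment_iff] at hseg
      exact absurd (hseg ▸ hy) (lt_irrefl _)
  · rintro h y (hy | rfl)
    · rw [openSegment_eq_image', image_subset_iff]
      exact fun t ht => Or.inl (h y hy t ht)
    · simp

end StarConvex

section SemistrictlyQuasiconvex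

variable (𝕜 : Type*) {E β : Type*} [Field 𝕜] [LinearOrder 𝕜] [IsStrictOrderedRing 𝕜]
  [AddCommGroup E] [Module 𝕜 E] [LinearOrder β]

def SemistrictlyQuasiconvexOn (s : Set E) (f : E → β) : Prop :=
  ∀ a ∈ s, ∀ b ∈ s, f a ≠ f b → ∀ t ∈ Ioo (0 : 𝕜) 1, f (a + t • (b - a)) < max (f a) (f b)

variable {𝕜}

theorem semistrictlyQuasiconvexOn_iff {s : Set E} {f : E → β} :
    SemistrictlyQuasiconvexOn 𝕜 s f ↔
      ∀ x ∈ s, ∀ y ∈ s, f y < f x → ∀ t ∈ Ioo (0 : 𝕜) 1, f (x + t • (y - x)) < f x := by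
  constructor
  · intro h x hx y hy hlt t ht
    simpa [hlt.le] using h x hx y hy hlt.ne' t ht
  · intro h a ha b hb hne t ⟨ht₀, ht₁⟩
    rcases hne.lt_or_gt with hab | hba
    · have hsymm : b + (1 - t) • (a - b) = a + t • (b - a) := by module
      have := h b hb a ha hab (1 - t) ⟨sub_pos.mpr ht₁, sub_lt_self 1 ht₀⟩
      rw [hsymm] at this
      exact this.trans_le (le_max_right _ _)
    · exact (h a ha b hb hba t ⟨ht₀, ht₁⟩).trans_le (le_max_left _ _)

end SemistrictlyQuasiconvex

/-- `L^<_φ(φ(x)) ∪ {x}` is star-shaped at `x` for every `x ∈ dom φ` iff `φ` is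
semistrictly quasiconvex. -/
theorem starShaped_strict_sublevel_iff_semistrictlyQuasiconvex
    {X : Type*} [AddCommGroup X] [Module ℝ X] (φ : X → EReal) :
    (∀ x : X, φ x ≠ ⊤ →
      ∀ y ∈ ({y : X | φ y < φ x} ∪ {x} : Set X), ∀ t ∈ Set.Icc (0 : ℝ) 1,
        x + t • (y - x) ∈ ({y : X | φ y < φ x} ∪ {x} : Set X)) ↔
    (∀ a b : X, φ a ≠ ⊤ → φ b ≠ ⊤ → φ a ≠ φ b →
      ∀ t ∈ Set.Ioo (0 : ℝ) 1, φ (a + t • (b - a)) < max (φ a) (φ b)) := by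
  calc _ ↔ ∀ x, φ x ≠ ⊤ → StarConvex ℝ x ({y | φ y < φ x} ∪ {x}) := by
        simp only [starConvex_iff_add_smul_sub_mem]
    _ ↔ ∀ x, φ x ≠ ⊤ → ∀ y, φ y < φ x → ∀ t ∈ Ioo (0 : ℝ) 1, φ (x + t • (y - x)) < φ x := by
        simp only [starConvex_strictSublevel_union_iff]
    _ ↔ SemistrictlyQuasiconvexOn ℝ {x | φ x ≠ ⊤} φ := by
        rw [semistrictlyQuasiconvexOn_iff]
        exact forall₂_congr fun x _ => ⟨fun h y _ => h y, fun h y hy => h y hy.ne_top hy⟩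
    _ ↔ _ := ⟨fun h a b ha hb => h a ha b hb, fun h a ha b hb => h a b ha hb⟩
end

section
/- Let φ : X → ℝ ∪ {±∞} be radially lower semicontinuous at a ∈ X. Then φ is radially quasiconvex at a if and only if for all b ∈ X and r ∈ ℝ ∪ {±∞} the set {t ∈ [0,1] | φ(a + t(b-a)) ≤ r} is a closed interval (possibly empty). In this case {s ∈ [0,1] | φ(a + s(b-a)) = inf_{t ∈ [0,1]} φ(a + t(b-a))} is a nonempty closed interval for each b. -/
open Set

/-- Radial restriction of `φ` to the segment `[a,b]`, extended by `+∞`. -/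
noncomputable def radRestr {X : Type*} [AddCommGroup X] [Module ℝ X]
    (φ : X → EReal) (a b : X) : ℝ → EReal :=
  fun t : ℝ => if t ∈ Set.Icc (0 : ℝ) 1 then φ (a + t • (b - a)) else ⊤

/-- Quasiconvexity of an extended-real-valued function on `ℝ`. -/
def QCone (ψ : ℝ → EReal) : Prop :=
  ∀ s t : ℝ, ∀ l ∈ Set.Ioo (0 : ℝ) 1, ψ (s + l * (t - s)) ≤ max (ψ s) (ψ t)

/-! Because `radRestr φ a b` is `⊤` off `[0,1]`, its quasiconvexity on `ℝ` is quasiconvexity of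
`t ↦ φ (a + t • (b - a))` on `[0,1]`, i.e. convexity of its sublevel sets, and its lower
semicontinuity makes these sublevel sets closed. On the compact `[0,1]` the infimum is attained,
and the set of minimizers is the sublevel set at the level of the infimum. -/

theorem qcone_iff_quasiconvexOn {s : Set ℝ} {ψ : ℝ → EReal} (hs : Convex ℝ s)
    (hψ : ∀ t ∉ s, ψ t = ⊤) : QCone ψ ↔ QuasiconvexOn ℝ s ψ := by
  rw [quasiconvexOn_iff_le_max, and_iff_right hs]
  constructor
  · intro h x hx y hy p q hp hq hpq
    obtain rfl : p = 1 - q := eq_sub_of_add_eq hpq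
    obtain rfl | hq0 := hq.eq_or_lt
    · simp
    obtain rfl | hq1 := (sub_nonneg.1 hp).eq_or_lt
    · simp
    convert h x y q ⟨hq0, hq1⟩ using 2
    simp only [smul_eq_mul]
    ring
  · intro h x y l hl
    by_cases hx : x ∈ s
    · by_cases hy : y ∈ s
      · convert h hx hy (sub_nonneg.2 hl.2.le) hl.1.le (sub_add_cancel 1 l) using 2
        simp only [smul_eq_mul]
        ring
      · simp [hψ y hy]
    · simp [hψ x hx]

theorem quasiconvexOn_congr {𝕜 E β : Type*} [Semiring 𝕜] [PartialOrder 𝕜] [AddCommMonoid E]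
    [SMul 𝕜 E] [LE β] {s : Set E} {f g : E → β} (h : EqOn f g s) :
    QuasiconvexOn 𝕜 s f ↔ QuasiconvexOn 𝕜 s g :=
  forall_congr' fun r => by rw [sep_ext_iff.2 fun _ hx => by rw [h hx]]

theorem LowerSemicontinuousOn.congr {α β : Type*} [TopologicalSpace α] [Preorder β]
    {s : Set α} {f g : α → β} (hf : LowerSemicontinuousOn f s) (h : EqOn f g s) :
    LowerSemicontinuousOn g s :=
  fun x hx => LowerSemicontinuousWithinAt.congr_of_eventuallyEq (hf x hx) hx
    (eventuallyEq_nhdsWithin_of_eqOn h)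

theorem LowerSemicontinuousOn.isClosed_sep_le {α β : Type*} [TopologicalSpace α] [LinearOrder β]
    {s : Set α} {f : α → β} (hf : LowerSemicontinuousOn f s) (hs : IsClosed s) (r : β) :
    IsClosed {x | x ∈ s ∧ f x ≤ r} := by
  obtain ⟨v, hv, hsv⟩ := lowerSemicontinuousOn_iff_preimage_Iic.1 hf r
  exact (hsv ▸ hs.inter hv : IsClosed (s ∩ f ⁻¹' Iic r))

theorem sep_eq_sInf_image_eq_sep_le {α β : Type*} [CompleteLattice β] (s : Set α) (f : α → β) :
    {x | x ∈ s ∧ f x = sInf (f '' s)} = {x | x ∈ s ∧ f x ≤ sInf (f '' s)} :=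
  sep_ext_iff.2 fun _ hx => ⟨le_of_eq, fun h => h.antisymm (sInf_le (mem_image_of_mem f hx))⟩

theorem IsMinOn.eq_sInf_image {α β : Type*} [CompleteLattice β] {s : Set α} {f : α → β} {x : α}
    (hx : x ∈ s) (h : IsMinOn f s x) : f x = sInf (f '' s) :=
  (IsLeast.csInf_eq ⟨mem_image_of_mem f hx, forall_mem_image.2 h⟩).symm

section Radial

variable {X : Type*} [AddCommGroup X] [Module ℝ X] (φ : X → EReal) (a b : X)

theorem radRestr_eqOn : EqOn (radRestr φ a b) (fun t => φ (a + t • (b - a))) (Icc 0 1) :=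
  fun _ ht => if_pos ht

theorem qcone_radRestr_iff :
    QCone (radRestr φ a b) ↔ QuasiconvexOn ℝ (Icc 0 1) (fun t : ℝ => φ (a + t • (b - a))) := by
  rw [qcone_iff_quasiconvexOn (ψ := radRestr φ a b) (convex_Icc 0 1) fun _ ht => if_neg ht,
    quasiconvexOn_congr (radRestr_eqOn φ a b)]

end Radial

/-- Let `φ` be radially l.s.c. at `a`. Then `φ` is radially quasiconvex at `a` iff
for all `b` and `r` the set `{t ∈ [0,1] | φ(a+t(b-a)) ≤ r}` is a closed interval
(i.e. closed and convex, possibly empty).  In that case the set of minimizers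
`{s ∈ [0,1] | φ(a+s(b-a)) = inf_{t∈[0,1]} φ(a+t(b-a))}` is a nonempty closed interval. -/
theorem radially_quasiconvex_iff_closed_intervals
    {X : Type*} [AddCommGroup X] [Module ℝ X]
    (φ : X → EReal) (a : X)
    (hradlsc : ∀ b : X, LowerSemicontinuous (radRestr φ a b)) :
    ((∀ b : X, QCone (radRestr φ a b)) ↔
      (∀ b : X, ∀ r : EReal,
        IsClosed {t : ℝ | t ∈ Set.Icc (0 : ℝ) 1 ∧ φ (a + t • (b - a)) ≤ r} ∧
        Convex ℝ {t : ℝ | t ∈ Set.Icc (0 : ℝ) 1 ∧ φ (a + t • (b - a)) ≤ r})) ∧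
    ((∀ b : X, QCone (radRestr φ a b)) →
      ∀ b : X,
        ({s : ℝ | s ∈ Set.Icc (0 : ℝ) 1 ∧
            φ (a + s • (b - a)) =
              sInf ((fun t : ℝ => φ (a + t • (b - a))) '' Set.Icc (0 : ℝ) 1)}).Nonempty ∧
        IsClosed {s : ℝ | s ∈ Set.Icc (0 : ℝ) 1 ∧
            φ (a + s • (b - a)) =
              sInf ((fun t : ℝ => φ (a + t • (b - a))) '' Set.Icc (0 : ℝ) 1)} ∧
        Convex ℝ {s : ℝ | s ∈ Set.Icc (0 : ℝ) 1 ∧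
            φ (a + s • (b - a)) =
              sInf ((fun t : ℝ => φ (a + t • (b - a))) '' Set.Icc (0 : ℝ) 1)}) := by
  have hlsc (b : X) : LowerSemicontinuousOn (fun t : ℝ => φ (a + t • (b - a))) (Icc 0 1) :=
    ((hradlsc b).lowerSemicontinuousOn _).congr (radRestr_eqOn φ a b)
  have hclosed (b : X) (r : EReal) :
      IsClosed {t : ℝ | t ∈ Icc (0 : ℝ) 1 ∧ φ (a + t • (b - a)) ≤ r} :=
    (hlsc b).isClosed_sep_le isClosed_Icc r
  refine ⟨forall_congr' fun b => ?_, fun hq b => ?_⟩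
  · simp only [qcone_radRestr_iff, QuasiconvexOn, hclosed, true_and]
  · obtain ⟨s, hs, hmin⟩ := (hlsc b).exists_isMinOn (nonempty_Icc.2 zero_le_one) isCompact_Icc
    rw [sep_eq_sInf_image_eq_sep_le]
    exact ⟨⟨s, hs, (hmin.eq_sInf_image hs).le⟩, hclosed b _,
      (qcone_radRestr_iff φ a b).1 (hq b) _⟩
end

section
/- Let φ : X → ℝ ∪ {±∞} be radially pseudoconvex and radially lower semicontinuous at a ∈ dom φ, and suppose dom φ is star-shaped at a. Then φ is radially semistrictly quasiconvex at a. -/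
open Filter Set

/-- Pseudoconvexity (via the lower Dini derivative) of a function on `ℝ`. -/
noncomputable def PCone (ψ : ℝ → EReal) : Prop :=
  ∀ u v : ℝ, ψ u < ψ v → sDini ψ v (u - v) < 0

/-- Semistrict quasiconvexity of an extended-real-valued function on `ℝ`. -/
def SSQCone (ψ : ℝ → EReal) : Prop :=
  ∀ s t : ℝ, ψ s ≠ ⊤ → ψ t ≠ ⊤ → ψ s ≠ ψ t →
    ∀ l ∈ Set.Ioo (0 : ℝ) 1, ψ (s + l * (t - s)) < max (ψ s) (ψ t)

/-!
On a line, pseudoconvexity says that if `ψ x` is finite and `ψ` is minimal at `x` on a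
one-sided neighbourhood pointing towards `y`, then `ψ x ≤ ψ y`: otherwise the Dini derivative
in that direction would be negative. Quasiconvexity follows: were `ψ x > max (ψ u) (ψ v)`,
lower semicontinuity would give a compact interval around `x` on which `ψ` stays above that
maximum, and a minimiser there is one-sidedly minimal towards `u` or towards `v`.
For semistrictness, if `ψ w = max (ψ s) (ψ t)` with, say, `ψ s < ψ t`, quasiconvexity makes `ψ`
constant on `(w, t)`, so the points there are local, hence global, minima, contradicting
`ψ s < ψ t`. Star-shapedness makes the domain of each radial restriction an interval.
-/

open Topology

theorem infAdd_coe_le (A t : ℝ) : infAdd A t ≤ ((A + t : ℝ) : EReal) :=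
  sInf_le ⟨A, t, rfl, le_rfl, le_rfl⟩

theorem eResid_nonneg {r s : EReal} (hs : s ≠ ⊤) (hs' : s ≠ ⊥) (hsr : s ≤ r) :
    0 ≤ eResid r s := by
  lift s to ℝ using ⟨hs, hs'⟩
  refine le_sInf ?_
  rintro _ ⟨t, rfl, ht⟩
  have : ((s : ℝ) : EReal) ≤ ((s + t : ℝ) : EReal) := hsr.trans (ht.trans (infAdd_coe_le s t))
  exact_mod_cast (by linarith [EReal.coe_le_coe_iff.1 this] : (0 : ℝ) ≤ t)

theorem tendsto_add_mul_sub_nhdsWithin {s : Set ℝ} {x y : ℝ}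
    (hs : ∀ d > 0, x + d * (y - x) ∈ s) :
    Tendsto (fun d : ℝ => x + d * (y - x)) (𝓝[>] 0) (𝓝[s] x) := by
  refine tendsto_nhdsWithin_of_tendsto_nhds_of_eventually_within _ ?_
    (eventually_nhdsWithin_of_forall hs)
  exact ((Continuous.tendsto' (by fun_prop) 0 x (by simp))).mono_left nhdsWithin_le_nhds

namespace PCone

variable {ψ : ℝ → EReal}

theorem le_of_eventually_le (hψ : PCone ψ) {s : Set ℝ} {x y : ℝ} (hx : ψ x ≠ ⊤)
    (hs : ∀ d > 0, x + d * (y - x) ∈ s) (hmin : ∀ᶠ z in 𝓝[s] x, ψ x ≤ ψ z) :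
    ψ x ≤ ψ y := by
  by_contra! hyx
  have hneg := frequently_lt_of_liminf_lt (by isBoundedDefault) (hψ y x hyx)
  obtain ⟨d, hd_neg, hd_min, hd_pos⟩ := (hneg.and_eventually
    (((tendsto_add_mul_sub_nhdsWithin hs).eventually hmin).and self_mem_nhdsWithin)).exists
  refine hd_neg.not_ge (EReal.mul_nonneg ?_ (eResid_nonneg hx (ne_bot_of_gt hyx) hd_min))
  exact EReal.coe_nonneg.2 (one_div_nonneg.2 (le_of_lt hd_pos))

theorem isMinOn_of_isLocalMin (hψ : PCone ψ) {x : ℝ} (hx : ψ x ≠ ⊤) (hmin : IsLocalMin ψ x) :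
    IsMinOn ψ univ x := fun y _ =>
  hψ.le_of_eventually_le hx (fun _ _ => mem_univ _) (by rwa [nhdsWithin_univ])

theorem le_of_forall_mem_Ioo_eq (hψ : PCone ψ) {a b : ℝ} {c : EReal} (hab : a < b)
    (hc : c ≠ ⊤) (hconst : ∀ z ∈ Ioo a b, ψ z = c) (y : ℝ) : c ≤ ψ y := by
  obtain ⟨m, hm⟩ := nonempty_Ioo.2 hab
  have hloc : IsLocalMin ψ m := mem_of_superset (Ioo_mem_nhds hm.1 hm.2) fun z hz =>
    ((hconst m hm).trans (hconst z hz).symm).le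
  rw [← hconst m hm] at hc ⊢
  exact hψ.isMinOn_of_isLocalMin hc hloc (mem_univ y)

theorem le_max_of_mem_Icc (hψ : PCone ψ) (hlsc : LowerSemicontinuous ψ)
    (hdom : OrdConnected {x | ψ x ≠ ⊤}) {u v x : ℝ} (hx : x ∈ Icc u v) :
    ψ x ≤ max (ψ u) (ψ v) := by
  by_contra! hc
  set c := max (ψ u) (ψ v)
  have hu : ψ u < ψ x := (le_max_left _ _).trans_lt hc
  have hv : ψ v < ψ x := (le_max_right _ _).trans_lt hc
  have hx' : x ∈ Ioo u v := ⟨hx.1.lt_of_ne (by rintro rfl; exact hu.false),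
    hx.2.lt_of_ne (by rintro rfl; exact hv.false)⟩
  obtain ⟨p, q, -, hpq_nhds, hpq⟩ :=
    exists_Icc_mem_subset_of_mem_nhds (inter_mem (Ioo_mem_nhds hx'.1 hx'.2) (hlsc x c hc))
  have hxpq : x ∈ Ioo p q := Icc_mem_nhds_iff.1 hpq_nhds
  obtain ⟨r, hr, hmin⟩ := (hlsc.lowerSemicontinuousOn _).exists_isMinOn
    ⟨x, Ioo_subset_Icc_self hxpq⟩ isCompact_Icc
  have hr_top : ψ r ≠ ⊤ := hdom.out hu.ne_top hv.ne_top (Ioo_subset_Icc_self (hpq hr).1)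
  have hcr : c < ψ r := (hpq hr).2
  rcases hr.2.lt_or_eq with hrq | rfl
  · have hrv : r < v := (hpq hr).1.2
    have := hψ.le_of_eventually_le hr_top (s := Ioi r)
      (fun d hd => lt_add_of_pos_right r (mul_pos hd (sub_pos.2 hrv)))
      (mem_of_superset (Ioo_mem_nhdsGT hrq) fun z hz => hmin ⟨hr.1.trans hz.1.le, hz.2.le⟩)
    exact (this.trans (le_max_right _ _)).not_gt hcr
  · have hur : u < r := (hpq hr).1.1
    have := hψ.le_of_eventually_le hr_top (s := Iio r)
      (fun d hd => add_lt_of_neg_right r (mul_neg_of_pos_of_neg hd (sub_neg.2 hur)))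
      (mem_of_superset (Ioo_mem_nhdsLT (hxpq.1.trans hxpq.2)) fun z hz =>
        hmin ⟨hz.1.le, hz.2.le⟩)
    exact (this.trans (le_max_left _ _)).not_gt hcr

theorem lt_max_of_mem_Ioo (hψ : PCone ψ) (hlsc : LowerSemicontinuous ψ)
    (hdom : OrdConnected {x | ψ x ≠ ⊤}) {s t w : ℝ} (hs : ψ s ≠ ⊤) (ht : ψ t ≠ ⊤)
    (hst : ψ s ≠ ψ t) (hw : w ∈ Ioo s t) : ψ w < max (ψ s) (ψ t) := by
  have hqc {u v x : ℝ} (hx : x ∈ Icc u v) := hψ.le_max_of_mem_Icc hlsc hdom hx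
  refine (hqc (Ioo_subset_Icc_self hw)).lt_of_ne fun hwM => ?_
  rcases hst.lt_or_gt with hlt | hlt
  · rw [max_eq_right hlt.le] at hwM
    have hconst : ∀ z ∈ Ioo w t, ψ z = ψ t := fun z hz => by
      refine le_antisymm ?_ ?_
      · exact (hqc ⟨hw.1.le.trans hz.1.le, hz.2.le⟩).trans_eq (max_eq_right hlt.le)
      · have := hwM ▸ hqc (u := s) (v := z) ⟨hw.1.le, hz.1.le⟩
        exact (le_max_iff.1 this).resolve_left hlt.not_ge
    exact (hψ.le_of_forall_mem_Ioo_eq hw.2 ht hconst s).not_gt hlt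
  · rw [max_eq_left hlt.le] at hwM
    have hconst : ∀ z ∈ Ioo s w, ψ z = ψ s := fun z hz => by
      refine le_antisymm ?_ ?_
      · exact (hqc ⟨hz.1.le, hz.2.le.trans hw.2.le⟩).trans_eq (max_eq_left hlt.le)
      · have := hwM ▸ hqc (u := z) (v := t) ⟨hz.2.le, hw.2.le⟩
        exact (le_max_iff.1 this).resolve_right hlt.not_ge
    exact (hψ.le_of_forall_mem_Ioo_eq hw.1 hs hconst t).not_gt hlt

theorem ssqcone (hψ : PCone ψ) (hlsc : LowerSemicontinuous ψ)
    (hdom : OrdConnected {x | ψ x ≠ ⊤}) : SSQCone ψ := by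
  intro s t hs ht hst l hl
  rcases (ne_of_apply_ne ψ hst).lt_or_gt with hlt | hlt
  · exact hψ.lt_max_of_mem_Ioo hlsc hdom hs ht hst ⟨by nlinarith [hl.1], by nlinarith [hl.2]⟩
  · rw [max_comm]
    exact hψ.lt_max_of_mem_Ioo hlsc hdom ht hs hst.symm ⟨by nlinarith [hl.2], by nlinarith [hl.1]⟩

end PCone

theorem ordConnected_radRestr_ne_top {X : Type*} [AddCommGroup X] [Module ℝ X]
    (φ : X → EReal) (a b : X)
    (hstar : ∀ x : X, φ x ≠ ⊤ → ∀ t ∈ Icc (0 : ℝ) 1, φ (t • a + (1 - t) • x) ≠ ⊤) :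
    OrdConnected {t | radRestr φ a b t ≠ ⊤} := by
  refine ⟨fun x (hx : radRestr φ a b x ≠ ⊤) y (hy : radRestr φ a b y ≠ ⊤) z hz => ?_⟩
  show radRestr φ a b z ≠ ⊤
  have mem_Icc_of_ne_top {t : ℝ} (ht : radRestr φ a b t ≠ ⊤) : t ∈ Icc (0 : ℝ) 1 := by
    by_contra h
    exact ht (if_neg h)
  have hy01 := mem_Icc_of_ne_top hy
  have hz01 : z ∈ Icc (0 : ℝ) 1 := ⟨(mem_Icc_of_ne_top hx).1.trans hz.1, hz.2.trans hy01.2⟩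
  have hzy : z / y ≤ 1 := div_le_one_of_le₀ hz.2 hy01.1
  have key := hstar _ (by simpa only [radRestr, if_pos hy01] using hy) (1 - z / y)
    ⟨by linarith, by linarith [div_nonneg hz01.1 hy01.1]⟩
  have harg : (1 - z / y) • a + (1 - (1 - z / y)) • (a + y • (b - a)) = a + z • (b - a) := by
    -- for `y = 0` the junk value `z / y = 0` is harmless, since then `z = 0`
    have : z / y * y = z := div_mul_cancel_of_imp fun h => le_antisymm (h ▸ hz.2) hz01.1
    rw [sub_sub_cancel, smul_add, smul_smul, this]
    module
  simpa only [radRestr, if_pos hz01, harg] using key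

theorem radially_ssqc_of_radially_pseudoconvex_general
    {X : Type*} [AddCommGroup X] [Module ℝ X]
    (φ : X → EReal) (a : X)
    (hradlsc : ∀ b : X, LowerSemicontinuous (radRestr φ a b))
    (hradpc : ∀ b : X, PCone (radRestr φ a b))
    (hstar : ∀ x : X, φ x ≠ ⊤ → ∀ t ∈ Set.Icc (0 : ℝ) 1, φ (t • a + (1 - t) • x) ≠ ⊤) :
    ∀ b : X, SSQCone (radRestr φ a b) := fun b =>
  (hradpc b).ssqcone (hradlsc b) (ordConnected_radRestr_ne_top φ a b hstar)

/-- If `φ` is radially pseudoconvex and radially l.s.c. at `a ∈ dom φ` and `dom φ` is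
star-shaped at `a`, then `φ` is radially semistrictly quasiconvex at `a`. -/
theorem radially_ssqc_of_radially_pseudoconvex
    {X : Type*} [AddCommGroup X] [Module ℝ X]
    (φ : X → EReal) (a : X) (ha : φ a ≠ ⊤)
    (hradlsc : ∀ b : X, LowerSemicontinuous (radRestr φ a b))
    (hradpc : ∀ b : X, PCone (radRestr φ a b))
    (hstar : ∀ x : X, φ x ≠ ⊤ → ∀ t ∈ Set.Icc (0 : ℝ) 1, φ (t • a + (1 - t) • x) ≠ ⊤) :
    ∀ b : X, SSQCone (radRestr φ a b) :=
  radially_ssqc_of_radially_pseudoconvex_general φ a hradlsc hradpc hstar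
end

section
/- Let f : X → G(Z,C) and z* ∈ C⁻ \ {0}. For all x, u ∈ X, the lower Dini directional derivative with respect to z* satisfies f↓_{z*}(x,u) = {z ∈ Z | φ↓(x,u) ≤ -z*(z)}, where φ = φ_{f,z*} is the scalarization φ(x) = inf{-z*(z) | z ∈ f(x)} and φ↓ is its scalar lower Dini derivative. Moreover u ↦ f↓_{z*}(x,u) is positively homogeneous: f↓_{z*}(x, ru) = r f↓_{z*}(x,u) for r > 0. -/
open Filter Set Pointwise

variable {X Z : Type*}

section Defs
variable [AddCommGroup Z] [Module ℝ Z] [TopologicalSpace Z]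

/-- Scalarization of a set `A ⊆ Z` with respect to `z*`: `inf {-z*(z) | z ∈ A}`. -/
noncomputable def scalSet (zs : Z →L[ℝ] ℝ) (A : Set Z) : EReal :=
  sInf ((fun z : Z => ((-(zs z) : ℝ) : EReal)) '' A)

/-- The `z*`-residual `A -_{z*} B = {z | B + z ⊆ cl(A + H(z*))}`, `H(z*) = {w | z*(w) ≤ 0}`. -/
def zResid (zs : Z →L[ℝ] ℝ) (A B : Set Z) : Set Z :=
  {z : Z | B + ({z} : Set Z) ⊆ closure (A + {w : Z | zs w ≤ 0})}

end Defs

/-- Lower Dini directional derivative of a set-valued map with respect to `z*`: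
`f↓_{z*}(x,u) = ⋂_{s>0} cl ⋃_{t∈(0,s)} (1/t)(f(x+tu) -_{z*} f(x))`. -/
noncomputable def setDini [AddCommGroup X] [Module ℝ X]
    [AddCommGroup Z] [Module ℝ Z] [TopologicalSpace Z]
    (f : X → Set Z) (zs : Z →L[ℝ] ℝ) (x u : X) : Set Z :=
  ⋂ s ∈ Set.Ioi (0 : ℝ),
    closure (⋃ t ∈ Set.Ioo (0 : ℝ) s, (1 / t) • zResid zs (f (x + t • u)) (f x))

/-!
For `z* ≠ 0` the set `A + H(z*)` is a union of parallel half-spaces `{y | -z*(a) ≤ -z*(y)}`, and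
the closure of such a union is the closed half-space of the infimum; so `cl(A + H(z*))` is
`{y | φ(A) ≤ -z*(y)}`, and `z ∈ A -_{z*} B` becomes the scalar inequality `φ(A) - φ(B) ≤ -z*(z)`,
inf-residuation on `EReal` being subtraction. Taking again closures of unions of
half-spaces over `t ∈ (0, s)` and intersecting over `s`, the set derivative is the half-space cut
out by `liminf_{t → 0⁺}` of the scalar difference quotients, i.e. by `φ↓(x,u)`. Positive
homogeneity follows from that of `φ↓`, via the substitution `t ↦ r t`.
-/

open Topology

lemma infAdd_coe (s : EReal) (t : ℝ) : infAdd s t = s + t := by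
  refine le_antisymm (EReal.le_of_forall_lt_iff_le.1 fun c hc => ?_) (le_sInf ?_)
  · have hs : s < ((c - t : ℝ) : EReal) := by
      rw [EReal.coe_sub,
        EReal.lt_sub_iff_add_lt (.inl (EReal.coe_ne_bot t)) (.inl (EReal.coe_ne_top t))]
      exact hc
    exact sInf_le ⟨c - t, t, by rw [sub_add_cancel], hs.le, le_rfl⟩
  · rintro _ ⟨a, b, rfl, ha, hb⟩
    exact (add_le_add ha hb).trans_eq (EReal.coe_add a b).symm

lemma eResid_eq_sub (r s : EReal) : eResid r s = r - s := by
  have key : ∀ t : ℝ, r ≤ infAdd s t ↔ r - s ≤ t := fun t => by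
    rw [infAdd_coe, add_comm, EReal.sub_le_iff_le_add (.inr (EReal.coe_ne_top t))
      (.inr (EReal.coe_ne_bot t))]
  refine le_antisymm (EReal.le_of_forall_lt_iff_le.1 fun c hc => ?_) (le_sInf ?_)
  · exact sInf_le ⟨c, rfl, (key c).2 hc.le⟩
  · rintro _ ⟨t, rfl, ht⟩
    exact (key t).1 ht

noncomputable def EReal.mulPosOrderIso (r : ℝ) (hr : 0 < r) : EReal ≃o EReal where
  toFun x := r * x
  invFun x := (r⁻¹ : ℝ) * x
  left_inv x := by
    simp only [← mul_assoc, ← EReal.coe_mul, inv_mul_cancel₀ hr.ne', EReal.coe_one, one_mul]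
  right_inv x := by
    simp only [← mul_assoc, ← EReal.coe_mul, mul_inv_cancel₀ hr.ne', EReal.coe_one, one_mul]
  map_rel_iff' {a b} := by
    show (r : EReal) * a ≤ r * b ↔ a ≤ b
    refine ⟨fun h => ?_, fun h => mul_le_mul_of_nonneg_left h (EReal.coe_nonneg.2 hr.le)⟩
    simpa only [← mul_assoc, ← EReal.coe_mul, inv_mul_cancel₀ hr.ne', EReal.coe_one, one_mul]
      using mul_le_mul_of_nonneg_left h (EReal.coe_nonneg.2 (inv_nonneg.2 hr.le))

lemma EReal.mulPosOrderIso_apply {r : ℝ} (hr : 0 < r) (a : EReal) :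
    EReal.mulPosOrderIso r hr a = r * a := rfl

lemma EReal.mulPosOrderIso_symm_apply {r : ℝ} (hr : 0 < r) (a : EReal) :
    (EReal.mulPosOrderIso r hr).symm a = (r⁻¹ : ℝ) * a := rfl

lemma smul_setOf_le_coe [AddCommGroup Z] [Module ℝ Z] (ℓ : Z →ₗ[ℝ] ℝ) (a : EReal) {r : ℝ}
    (hr : 0 < r) :
    r • {z | a ≤ (ℓ z : EReal)} = {z | (r : EReal) * a ≤ ℓ z} := by
  ext z
  rw [mem_smul_set_iff_inv_smul_mem₀ hr.ne', mem_ofPred_eq, mem_ofPred_eq, map_smul, smul_eq_mul,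
    EReal.coe_mul, ← EReal.mulPosOrderIso_symm_apply hr, OrderIso.le_symm_apply,
    EReal.mulPosOrderIso_apply]

/-- A point of the right-hand side is approached from inside the union along `w` with `ℓ w = 1`. -/
lemma closure_biUnion_setOf_le_coe [AddCommGroup Z] [Module ℝ Z] [TopologicalSpace Z]
    [ContinuousAdd Z] [ContinuousSMul ℝ Z] {ι : Type*} (ℓ : Z →L[ℝ] ℝ) (hℓ : ℓ ≠ 0) (s : Set ι)
    (g : ι → EReal) :
    closure (⋃ i ∈ s, {z | g i ≤ (ℓ z : EReal)}) = {z | ⨅ i ∈ s, g i ≤ (ℓ z : EReal)} := by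
  refine subset_antisymm (closure_minimal ?_ ?_) fun z hz => ?_
  · simp only [iUnion_subset_iff]
    exact fun i hi z hz => (biInf_le g hi).trans hz
  · exact isClosed_Ici.preimage (continuous_coe_real_ereal.comp ℓ.continuous)
  obtain ⟨w, hw⟩ := (ℓ : Z →ₗ[ℝ] ℝ).surjective_or_eq_zero.resolve_right
    (fun h => hℓ (ContinuousLinearMap.coe_injective h)) 1
  have htend : Tendsto (fun ε : ℝ => z + ε • w) (𝓝[>] 0) (𝓝 z) := by
    have hc : Continuous fun ε : ℝ => z + ε • w :=
      continuous_const.add (continuous_id.smul continuous_const)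
    simpa using (hc.tendsto 0).mono_left nhdsWithin_le_nhds
  refine mem_closure_of_tendsto htend (eventually_nhdsWithin_of_forall fun ε (hε : 0 < ε) => ?_)
  have hlt : ⨅ i ∈ s, g i < ((ℓ z + ε : ℝ) : EReal) :=
    hz.trans_lt (EReal.coe_lt_coe_iff.2 (lt_add_of_pos_right _ hε))
  obtain ⟨i, hi, hgi⟩ : ∃ i ∈ s, g i < ((ℓ z + ε : ℝ) : EReal) := by
    simpa only [iInf_lt_iff, exists_prop] using hlt
  have hval : ℓ (z + ε • w) = ℓ z + ε := by
    rw [map_add, map_smul, smul_eq_mul, show ℓ w = 1 from hw, mul_one]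
  exact mem_biUnion hi (show g i ≤ (ℓ (z + ε • w) : EReal) from hval ▸ hgi.le)

section Scalarization
variable [AddCommGroup Z] [Module ℝ Z] [TopologicalSpace Z] [ContinuousAdd Z] [ContinuousSMul ℝ Z]

lemma closure_add_setOf_nonpos (zs : Z →L[ℝ] ℝ) (hzs0 : zs ≠ 0) (A : Set Z) :
    closure (A + {w | zs w ≤ 0}) = {y | scalSet zs A ≤ ((-(zs y) : ℝ) : EReal)} := by
  have hA : A + {w | zs w ≤ 0} = ⋃ a ∈ A, {y | ((-(zs a) : ℝ) : EReal) ≤ ((-zs) y : ℝ)} := by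
    ext y
    simp only [Set.mem_add, mem_ofPred_eq, mem_iUnion₂, exists_prop, neg_apply,
      EReal.coe_le_coe_iff, neg_le_neg_iff]
    constructor
    · rintro ⟨a, ha, w, hw, rfl⟩
      exact ⟨a, ha, by rw [map_add]; linarith [show zs w ≤ 0 from hw]⟩
    · rintro ⟨a, ha, hle⟩
      exact ⟨a, ha, y - a, show zs (y - a) ≤ 0 by rw [map_sub]; linarith, add_sub_cancel a y⟩
  rw [hA, closure_biUnion_setOf_le_coe (-zs) (neg_ne_zero.2 hzs0), scalSet, sInf_image]
  rfl

lemma zResid_eq (zs : Z →L[ℝ] ℝ) (hzs0 : zs ≠ 0) (A B : Set Z) :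
    zResid zs A B = {z | scalSet zs A - scalSet zs B ≤ ((-(zs z) : ℝ) : EReal)} := by
  ext z
  set c : ℝ := -(zs z)
  have hc : ∀ y : EReal, scalSet zs A ≤ y + c ↔ scalSet zs A - c ≤ y := fun y =>
    (EReal.sub_le_iff_le_add (.inl (EReal.coe_ne_bot c)) (.inl (EReal.coe_ne_top c))).symm
  calc z ∈ zResid zs A B ↔ ∀ b ∈ B, scalSet zs A ≤ ((-(zs b) : ℝ) : EReal) + c := by
        rw [zResid, mem_ofPred_eq, closure_add_setOf_nonpos zs hzs0, add_singleton,
          image_subset_iff]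
        simp only [subset_def, mem_preimage, mem_ofPred_eq, map_add, neg_add, EReal.coe_add, c]
    _ ↔ scalSet zs A - c ≤ scalSet zs B := by
        simp only [hc]
        unfold scalSet
        rw [le_sInf_iff, forall_mem_image]
    _ ↔ scalSet zs A - scalSet zs B ≤ c := by
        rw [← hc, EReal.sub_le_iff_le_add (.inr (EReal.coe_ne_top c)) (.inr (EReal.coe_ne_bot c)),
          add_comm]

lemma smul_zResid_eq (zs : Z →L[ℝ] ℝ) (hzs0 : zs ≠ 0) (A B : Set Z) {t : ℝ} (ht : 0 < t) :
    (1 / t) • zResid zs A B =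
      {z | ((1 / t : ℝ) : EReal) * eResid (scalSet zs A) (scalSet zs B) ≤
        ((-(zs z) : ℝ) : EReal)} := by
  rw [zResid_eq zs hzs0, eResid_eq_sub]
  exact smul_setOf_le_coe (↑(-zs) : Z →ₗ[ℝ] ℝ) _ (one_div_pos.2 ht)

end Scalarization

lemma map_mulLeft_nhdsGT_zero {r : ℝ} (hr : 0 < r) : map (r * ·) (𝓝[>] 0) = 𝓝[>] 0 := by
  conv_lhs => rw [← comap_mulLeft_nhdsGT_zero hr]
  exact map_comap_of_surjective (mul_left_surjective₀ hr.ne') _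

section Dini
variable [AddCommGroup X] [Module ℝ X]

noncomputable def diffQuot (φ : X → EReal) (x u : X) (t : ℝ) : EReal :=
  ((1 / t : ℝ) : EReal) * eResid (φ (x + t • u)) (φ x)

lemma vDini_eq_liminf (φ : X → EReal) (x u : X) :
    vDini φ x u = liminf (diffQuot φ x u) (𝓝[>] 0) := rfl

lemma vDini_eq_iSup_iInf (φ : X → EReal) (x u : X) :
    vDini φ x u = ⨆ (s : ℝ) (_ : 0 < s), ⨅ t ∈ Ioo 0 s, diffQuot φ x u t :=
  (nhdsGT_basis 0).liminf_eq_iSup_iInf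

lemma diffQuot_smul (φ : X → EReal) (x u : X) {r : ℝ} (hr : 0 < r) (t : ℝ) :
    diffQuot φ x (r • u) t = r * diffQuot φ x u (r * t) := by
  rw [diffQuot, diffQuot, smul_smul, mul_comm t r, ← mul_assoc, ← EReal.coe_mul]
  congr 3
  field_simp

lemma vDini_smul (φ : X → EReal) (x u : X) {r : ℝ} (hr : 0 < r) :
    vDini φ x (r • u) = r * vDini φ x u := by
  let e := EReal.mulPosOrderIso r hr
  calc vDini φ x (r • u) = liminf (fun t => e (diffQuot φ x u (r * t))) (𝓝[>] 0) := by
        rw [vDini_eq_liminf]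
        exact congrArg (liminf · _) (funext (diffQuot_smul φ x u hr))
    _ = e (liminf (diffQuot φ x u ∘ (r * ·)) (𝓝[>] 0)) := e.liminf_apply.symm
    _ = e (vDini φ x u) := by
        rw [liminf_comp, map_mulLeft_nhdsGT_zero hr, vDini_eq_liminf]

variable [AddCommGroup Z] [Module ℝ Z] [TopologicalSpace Z] [ContinuousAdd Z] [ContinuousSMul ℝ Z]

lemma setDini_eq (zs : Z →L[ℝ] ℝ) (hzs0 : zs ≠ 0) (f : X → Set Z) (x u : X) :
    setDini f zs x u =
      {z | vDini (fun y => scalSet zs (f y)) x u ≤ ((-(zs z) : ℝ) : EReal)} := by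
  have hU : ∀ s : ℝ, ⋃ t ∈ Ioo 0 s, (1 / t) • zResid zs (f (x + t • u)) (f x) =
      ⋃ t ∈ Ioo 0 s, {z | diffQuot (fun y => scalSet zs (f y)) x u t ≤ ((-zs) z : ℝ)} :=
    fun s => iUnion₂_congr fun t ht => smul_zResid_eq zs hzs0 _ _ ht.1
  ext z
  simp only [setDini, hU, closure_biUnion_setOf_le_coe (-zs) (neg_ne_zero.2 hzs0)]
  simp only [vDini_eq_iSup_iInf, iSup₂_le_iff, mem_iInter₂, mem_Ioi, mem_ofPred_eq, neg_apply]

end Dini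

theorem setDini_scalarization_and_posHom_general
    [AddCommGroup X] [Module ℝ X]
    [AddCommGroup Z] [Module ℝ Z] [TopologicalSpace Z]
    [IsTopologicalAddGroup Z] [ContinuousSMul ℝ Z]
    (zs : Z →L[ℝ] ℝ) (hzs0 : zs ≠ 0)
    (f : X → Set Z)
    (x u : X) :
    setDini f zs x u =
      {z : Z | vDini (fun y : X => scalSet zs (f y)) x u ≤ ((-(zs z) : ℝ) : EReal)} ∧
    (∀ r : ℝ, 0 < r → setDini f zs x (r • u) = r • setDini f zs x u) := by
  refine ⟨setDini_eq zs hzs0 f x u, fun r hr => ?_⟩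
  rw [setDini_eq zs hzs0 f x (r • u), setDini_eq zs hzs0 f x u, vDini_smul _ x u hr]
  exact (smul_setOf_le_coe (↑(-zs) : Z →ₗ[ℝ] ℝ) _ hr).symm

/-- Scalarization formula and positive homogeneity of the `z*`-lower Dini directional
derivative of a `G(Z,C)`-valued map. -/
theorem setDini_scalarization_and_posHom
    [AddCommGroup X] [Module ℝ X]
    [AddCommGroup Z] [Module ℝ Z] [TopologicalSpace Z]
    [IsTopologicalAddGroup Z] [ContinuousSMul ℝ Z] [LocallyConvexSpace ℝ Z]
    (C : Set Z) (hCclosed : IsClosed C) (hCconv : Convex ℝ C) (hC0 : (0 : Z) ∈ C)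
    (hCcone : ∀ c ∈ C, ∀ t : ℝ, 0 < t → t • c ∈ C)
    (zs : Z →L[ℝ] ℝ) (hzs : ∀ c ∈ C, zs c ≤ 0) (hzs0 : zs ≠ 0)
    (f : X → Set Z) (hf : ∀ x : X, f x = closure (convexHull ℝ (f x + C)))
    (x u : X) :
    setDini f zs x u =
      {z : Z | vDini (fun y : X => scalSet zs (f y)) x u ≤ ((-(zs z) : ℝ) : EReal)} ∧
    (∀ r : ℝ, 0 < r → setDini f zs x (r • u) = r • setDini f zs x u) :=
  setDini_scalarization_and_posHom_general zs hzs0 f x u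
end

section
/- Let φ : X → ℝ ∪ {±∞} be such that φ(a + t(b-a)) ≤ max{φ(a), φ(b)} for all b ∈ X, t ∈ (0,1), for a fixed a with φ(a) = inf_X φ, a ∈ dom φ. Then for every b ∈ X and every pair 0 ≤ s₁ < s₂ ≤ 1 and α ∈ (0,1), φ(a + (α s₁ + (1-α) s₂)(b - a)) ≤ max{φ(a + s₁(b-a)), φ(a + s₂(b-a))}; i.e., t ↦ φ(a + t(b-a)) is quasiconvex on [0,1]. -/
open Set

/- Since `φ a` is the minimum, the hypothesis reads `φ (a + t • (b - a)) ≤ φ b`: `φ` is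
nondecreasing along every ray from `a`, which already gives quasiconvexity on each ray. -/

theorem monotoneOn_ray_of_le_max {X β : Type*} [AddCommGroup X] [Module ℝ X] [LinearOrder β]
    (φ : X → β) (a : X) (hmin : ∀ x : X, φ a ≤ φ x)
    (hq : ∀ b : X, ∀ t ∈ Ioo (0 : ℝ) 1, φ (a + t • (b - a)) ≤ max (φ a) (φ b)) (v : X) :
    MonotoneOn (fun t : ℝ => φ (a + t • v)) (Ici 0) := by
  intro t ht s _ hts
  rcases (mem_Ici.mp ht).eq_or_lt with rfl | ht₀
  · simpa using hmin _
  rcases hts.eq_or_lt with rfl | hts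
  · rfl
  have hs₀ : 0 < s := ht₀.trans hts
  have hpoint : a + t • v = a + (t / s) • ((a + s • v) - a) := by
    rw [add_sub_cancel_left, smul_smul, div_mul_cancel₀ _ hs₀.ne']
  calc φ (a + t • v) = φ (a + (t / s) • ((a + s • v) - a)) := congrArg φ hpoint
    _ ≤ max (φ a) (φ (a + s • v)) := hq _ _ ⟨div_pos ht₀ hs₀, (div_lt_one hs₀).mpr hts⟩
    _ = φ (a + s • v) := max_eq_right (hmin _)

theorem radial_quasiconvex_on_segment_general
    {X : Type*} [AddCommGroup X] [Module ℝ X]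
    (φ : X → EReal) (a : X) (hmin : ∀ x : X, φ a ≤ φ x)
    (hq : ∀ b : X, ∀ t ∈ Set.Ioo (0 : ℝ) 1, φ (a + t • (b - a)) ≤ max (φ a) (φ b)) :
    ∀ b : X, ∀ s₁ s₂ : ℝ, 0 ≤ s₁ → s₁ < s₂ → s₂ ≤ 1 → ∀ α ∈ Set.Ioo (0 : ℝ) 1,
      φ (a + (α * s₁ + (1 - α) * s₂) • (b - a)) ≤
        max (φ (a + s₁ • (b - a))) (φ (a + s₂ • (b - a))) := by
  intro b s₁ s₂ hs₁ h12 _ α ⟨hα₀, hα₁⟩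
  have hmid_nonneg : 0 ≤ α * s₁ + (1 - α) * s₂ := by nlinarith
  have hmid_le : α * s₁ + (1 - α) * s₂ ≤ s₂ := by nlinarith
  exact (monotoneOn_ray_of_le_max φ a hmin hq (b - a) hmid_nonneg (hs₁.trans h12.le) hmid_le).trans
    le_sup_right

/-- If `φ(a + t(b-a)) ≤ max{φ(a), φ(b)}` for all `b` and `t ∈ (0,1)`, where `a ∈ dom φ`
attains the infimum of `φ`, then `t ↦ φ(a + t(b-a))` is quasiconvex on `[0,1]`. -/
theorem radial_quasiconvex_on_segment
    {X : Type*} [AddCommGroup X] [Module ℝ X]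
    (φ : X → EReal) (a : X) (ha : φ a ≠ ⊤) (hmin : ∀ x : X, φ a ≤ φ x)
    (hq : ∀ b : X, ∀ t ∈ Set.Ioo (0 : ℝ) 1, φ (a + t • (b - a)) ≤ max (φ a) (φ b)) :
    ∀ b : X, ∀ s₁ s₂ : ℝ, 0 ≤ s₁ → s₁ < s₂ → s₂ ≤ 1 → ∀ α ∈ Set.Ioo (0 : ℝ) 1,
      φ (a + (α * s₁ + (1 - α) * s₂) • (b - a)) ≤
        max (φ (a + s₁ • (b - a))) (φ (a + s₂ • (b - a))) :=
  radial_quasiconvex_on_segment_general φ a hmin hq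
end
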